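/- arXiv:2110.02738 — 2 statements merged into one kernel-verified Lean document; each statement's English description precedes it below -/
import Mathlib

section
/- Let N be an odd positive integer and u an integer with gcd(u, N) = 1. Define the Zadoff-Chu sequence z_u : {0,…,N−1} → ℂ by z_u[n] = exp(−iπ u n(n+1)/N). Then for every integer c with 0 < c < N, the periodic autocorrelation vanishes: ∑_{n=0}^{N−1} z_u[n] · conj(z_u[(n+c) mod N]) = 0. -/
open Finset Complex ComplexConjugate
open scoped Real

/-!
Since `N` is odd, `(n + N)(n + N + 1) - n(n + 1) = N (2n + N + 1)` is a multiple of `2N`, so the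
sequence is `N`-periodic and the cyclic shift `(n + c) % N` may be replaced by `n + c`. In
`z[n] * conj z[n + c]` the quadratic terms cancel, leaving `conj z[c] * ω ^ n` with
`ω = exp(2πi/N) ^ (u c)`. As `u` is a unit mod `N` and `0 < c < N`, `ω` is an `N`-th root of
unity other than `1`, so the geometric sum vanishes.
-/

theorem geom_sum_eq_zero_of_pow_eq_one {R : Type*} [Ring R] [NoZeroDivisors R] {x : R} {n : ℕ}
    (hx : x ≠ 1) (hxn : x ^ n = 1) : ∑ i ∈ range n, x ^ i = 0 := by
  have h := geom_sum_mul x n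
  rw [hxn, sub_self] at h
  exact (mul_eq_zero.mp h).resolve_right (sub_ne_zero.mpr hx)

noncomputable def zadoffChu (N : ℕ) (u : ℤ) (n : ℕ) : ℂ :=
  exp (-(I * π * u * n * (n + 1)) / N)

theorem zadoffChu_periodic {N : ℕ} (hN : Odd N) (u : ℤ) :
    Function.Periodic (zadoffChu N u) N := by
  obtain ⟨k, rfl⟩ := hN
  intro n
  have hN0 : ((2 * k + 1 : ℕ) : ℂ) ≠ 0 := by norm_cast
  rw [zadoffChu, zadoffChu,
    ← exp_periodic.int_mul (-(u * (n + k + 1))) (-(I * π * u * n * (n + 1)) / (2 * k + 1 : ℕ))]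
  congr 1
  field_simp
  push_cast
  ring

theorem zadoffChu_mul_conj_add (N : ℕ) (u : ℤ) (n c : ℕ) :
    zadoffChu N u n * conj (zadoffChu N u (n + c)) =
      conj (zadoffChu N u c) * (exp (2 * π * I / N) ^ (u * c)) ^ n := by
  simp only [zadoffChu, ← exp_conj, ← exp_int_mul, ← exp_nat_mul, ← exp_add, map_div₀, map_neg,
    map_mul, map_add, map_one, conj_I, conj_ofReal, map_intCast, map_natCast]
  congr 1
  push_cast
  ring

theorem zadoff_chu_autocorrelation_zero_general
    (N : ℕ) (hNodd : Odd N) (u : ℤ) (hu : Int.gcd u N = 1)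
    (z : ℕ → ℂ)
    (hz : ∀ n : ℕ, z n =
      Complex.exp (-(Complex.I * (Real.pi : ℂ) * (u : ℂ) * (n : ℂ) * ((n : ℂ) + 1)) / (N : ℂ)))
    (c : ℕ) (hc0 : 0 < c) (hcN : c < N) :
    ∑ n ∈ Finset.range N, z n * (starRingEnd ℂ) (z ((n + c) % N)) = 0 := by
  obtain rfl : z = zadoffChu N u := funext hz
  have hζ := isPrimitiveRoot_exp N hNodd.pos.ne'
  have hω : exp (2 * π * I / N) ^ (u * c) ≠ 1 := by
    rw [Ne, hζ.zpow_eq_one_iff_dvd]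
    intro hdvd
    have hNc : (N : ℤ) ∣ c :=
      (Int.isCoprime_iff_gcd_eq_one.mpr hu).symm.dvd_of_dvd_mul_left hdvd
    exact absurd (Nat.le_of_dvd hc0 (Int.natCast_dvd_natCast.mp hNc)) hcN.not_ge
  have hωN : (exp (2 * π * I / N) ^ (u * c)) ^ N = 1 := by
    rw [← zpow_natCast, ← zpow_mul, hζ.zpow_eq_one_iff_dvd]
    exact dvd_mul_left _ _
  simp_rw [(zadoffChu_periodic hNodd u).map_mod_nat, zadoffChu_mul_conj_add, ← mul_sum,
    geom_sum_eq_zero_of_pow_eq_one hω hωN, mul_zero]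

/-- **Zero periodic autocorrelation of Zadoff-Chu sequences.**
For an odd positive integer `N` and a root index `u` coprime to `N`, the
Zadoff-Chu sequence `z_u[n] = exp(-iπ u n(n+1)/N)` has vanishing periodic
autocorrelation at every nonzero cyclic shift `c` with `0 < c < N`. -/
theorem zadoff_chu_autocorrelation_zero
    (N : ℕ) (hN : 0 < N) (hNodd : Odd N) (u : ℤ) (hu : Int.gcd u N = 1)
    (z : ℕ → ℂ)
    (hz : ∀ n : ℕ, z n =
      Complex.exp (-(Complex.I * (Real.pi : ℂ) * (u : ℂ) * (n : ℂ) * ((n : ℂ) + 1)) / (N : ℂ)))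
    (c : ℕ) (hc0 : 0 < c) (hcN : c < N) :
    ∑ n ∈ Finset.range N, z n * (starRingEnd ℂ) (z ((n + c) % N)) = 0 :=
  zadoff_chu_autocorrelation_zero_general N hNodd u hu z hz c hc0 hcN
end

section
/- Let N be an odd positive integer and u an integer with gcd(u, N) = 1, and let z_u[n] = exp(−iπ u n(n+1)/N). For each l ∈ {0,…,N−1} define the vector w_l ∈ ℂ^N by w_l[n] = z_u[(n+l) mod N] · conj(z_u[n]). Then the averaged outer-product matrix (1/N) ∑_{l=0}^{N−1} w_l w_l^H equals the N×N identity matrix; in particular this covariance matrix is diagonal. -/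
/-!
Since `n(n+1)` is even, `z_u[n] = ψ(-u T(n))` for the standard additive character `ψ` of `ZMod N`
and the triangular number `T(n) = (n+1).choose 2`. As `2` is invertible modulo the odd `N`,
`T(n) mod N` depends only on `n mod N`, so the reduction `(n + l) % N` is harmless, and
`T(n + l) = T(n) + n l + T(l)` turns the `(i, j)` entry of `w_l w_lᴴ` into `ψ(l u (j - i))`.
Summing over `l` gives `N` or `0` by orthogonality of characters, according as `u (i - j) ≡ 0`,
i.e. (since `u` is a unit modulo `N`) as `i = j`.
-/

open Finset Matrix Complex Real

lemma Nat.two_mul_succ_choose_two (k : ℕ) : 2 * (k + 1).choose 2 = k * (k + 1) := by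
  rw [Nat.choose_two_right, Nat.mul_div_cancel' (Nat.even_mul_pred_self _).two_dvd,
    Nat.add_sub_cancel, mul_comm]

namespace ZMod

variable {N : ℕ}

lemma isUnit_two_of_odd (hN : Odd N) : IsUnit (2 : ZMod N) := by
  simpa using (isUnit_iff_coprime 2 N).2 (Nat.coprime_two_left.2 hN)

lemma isUnit_intCast_of_gcd_eq_one {u : ℤ} (hu : Int.gcd u N = 1) : IsUnit (u : ZMod N) := by
  have := (Int.isCoprime_iff_gcd_eq_one.2 hu).intCast (R := ZMod N)
  rwa [Int.cast_natCast, natCast_self, isCoprime_zero_right] at this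

lemma sum_range_natCast [NeZero N] {M : Type*} [AddCommMonoid M] (f : ZMod N → M) :
    ∑ l ∈ range N, f l = ∑ x, f x :=
  sum_nbij' Nat.cast val (by simp) (fun x _ => mem_range.2 x.val_lt)
    (fun l hl => val_cast_of_lt (mem_range.1 hl)) (fun x _ => natCast_zmod_val x) (fun _ _ => rfl)

lemma sum_range_stdAddChar_natCast_mul [NeZero N] (a : ZMod N) :
    ∑ l ∈ range N, stdAddChar ((l : ZMod N) * a) = if a = 0 then (N : ℂ) else 0 := by
  rw [sum_range_natCast (fun x => stdAddChar (x * a)),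
    AddChar.sum_mulShift a (isPrimitive_stdAddChar N), card, Nat.cast_ite, Nat.cast_zero]

lemma conj_stdAddChar [NeZero N] (a : ZMod N) :
    (starRingEnd ℂ) (stdAddChar a) = stdAddChar (-a) := by
  rw [AddChar.starComp_apply (by simp [ringChar_zmod_n, NeZero.pos]), AddChar.inv_apply]

lemma natCast_succ_choose_two_mod (hN : Odd N) (m : ℕ) :
    (((m % N + 1).choose 2 : ℕ) : ZMod N) = ((m + 1).choose 2 : ℕ) := by
  have two_mul_choose (k : ℕ) : (2 : ZMod N) * ((k + 1).choose 2 : ℕ) = k * (k + 1) := by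
    exact_mod_cast congrArg (Nat.cast (R := ZMod N)) (Nat.two_mul_succ_choose_two k)
  apply (isUnit_two_of_odd hN).mul_left_cancel
  rw [two_mul_choose, two_mul_choose, natCast_mod]

end ZMod

lemma Nat.add_succ_choose_two (a b : ℕ) :
    (a + b + 1).choose 2 = (a + 1).choose 2 + a * b + (b + 1).choose 2 := by
  qify
  simp only [Nat.cast_choose_two]
  push_cast
  ring

lemma exp_zadoffChu_eq_stdAddChar (N : ℕ) [NeZero N] (u : ℤ) (n : ℕ) :
    exp (-(I * π * u * n * (n + 1)) / N) =
      ZMod.stdAddChar (-(u * (n + 1).choose 2) : ZMod N) := by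
  have := ZMod.stdAddChar_coe (N := N) (-(u * (n + 1).choose 2))
  push_cast at this
  rw [this, Nat.cast_choose_two]
  congr 1
  push_cast
  ring

theorem zadoff_chu_avg_outer_product_eq_identity_general
    (N : ℕ) (hNodd : Odd N) (u : ℤ) (hu : Int.gcd u N = 1)
    (z : ℕ → ℂ)
    (hz : ∀ n : ℕ, z n =
      Complex.exp (-(Complex.I * (Real.pi : ℂ) * (u : ℂ) * (n : ℂ) * ((n : ℂ) + 1)) / (N : ℂ)))
    (w : ℕ → ℕ → ℂ)
    (hw : ∀ l n : ℕ, w l n = z ((n + l) % N) * (starRingEnd ℂ) (z n)) :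
    ((N : ℂ))⁻¹ • ∑ l ∈ Finset.range N,
        Matrix.of (fun i j : Fin N => w l (i : ℕ) * (starRingEnd ℂ) (w l (j : ℕ)))
      = (1 : Matrix (Fin N) (Fin N) ℂ) := by
  have : NeZero N := ⟨hNodd.pos.ne'⟩
  have hw_eq (l n : ℕ) :
      w l n = ZMod.stdAddChar (-(u * (n * l + (l + 1).choose 2)) : ZMod N) := by
    rw [hw, hz, hz, exp_zadoffChu_eq_stdAddChar, exp_zadoffChu_eq_stdAddChar,
      ZMod.natCast_succ_choose_two_mod hNodd, ZMod.conj_stdAddChar, ← AddChar.map_add_eq_mul,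
      Nat.add_succ_choose_two]
    congr 1
    push_cast
    ring
  have hentry (l : ℕ) (i j : Fin N) : w l i * (starRingEnd ℂ) (w l j) =
      ZMod.stdAddChar (l * (u * ((j : ℕ) - (i : ℕ))) : ZMod N) := by
    rw [hw_eq, hw_eq, ZMod.conj_stdAddChar, ← AddChar.map_add_eq_mul]
    congr 1
    ring
  have hdiag (i j : Fin N) : (u * ((j : ℕ) - (i : ℕ) : ZMod N)) = 0 ↔ i = j := by
    rw [(ZMod.isUnit_intCast_of_gcd_eq_one hu).mul_right_eq_zero, sub_eq_zero,
      ZMod.natCast_eq_natCast_iff', Nat.mod_eq_of_lt i.isLt, Nat.mod_eq_of_lt j.isLt, Fin.val_inj,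
      eq_comm]
  ext i j
  simp only [Matrix.smul_apply, Matrix.sum_apply, of_apply, hentry,
    ZMod.sum_range_stdAddChar_natCast_mul, hdiag, one_apply, smul_eq_mul]
  split_ifs <;> simp [hNodd.pos.ne']

/-- **The averaged outer product of matched-filter outputs over all cyclic shifts
is the identity.** For the Zadoff-Chu sequence `z_u` of odd length `N` with
`gcd(u,N)=1`, setting `w_l[n] = z_u[(n+l) mod N] * conj(z_u[n])`, the matrix
`(1/N) ∑_{l<N} w_l w_lᴴ` equals the `N × N` identity; in particular it is diagonal. -/
theorem zadoff_chu_avg_outer_product_eq_identity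
    (N : ℕ) (hN : 0 < N) (hNodd : Odd N) (u : ℤ) (hu : Int.gcd u N = 1)
    (z : ℕ → ℂ)
    (hz : ∀ n : ℕ, z n =
      Complex.exp (-(Complex.I * (Real.pi : ℂ) * (u : ℂ) * (n : ℂ) * ((n : ℂ) + 1)) / (N : ℂ)))
    (w : ℕ → ℕ → ℂ)
    (hw : ∀ l n : ℕ, w l n = z ((n + l) % N) * (starRingEnd ℂ) (z n)) :
    ((N : ℂ))⁻¹ • ∑ l ∈ Finset.range N,
        Matrix.of (fun i j : Fin N => w l (i : ℕ) * (starRingEnd ℂ) (w l (j : ℕ)))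
      = (1 : Matrix (Fin N) (Fin N) ℂ) :=
  zadoff_chu_avg_outer_product_eq_identity_general N hNodd u hu z hz w hw
end
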